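/- arXiv:0912.4135 — 2 statements merged into one kernel-verified Lean document; each statement's English description precedes it below -/
import Mathlib

section
/- Let Q₃ : M^{3×3} → ℝ be a positive semidefinite quadratic form, and for G ∈ M^{2×2} define Q₂(G) := inf { Q₃(F) : F ∈ M^{3×3}, F_{ij} = G_{ij} for 1 ≤ i, j ≤ 2 }. Then Q₂ is a quadratic form on M^{2×2}, i.e. Q₂(λG) = λ² Q₂(G) for all λ ∈ ℝ and the map (G,H) ↦ ½(Q₂(G+H) − Q₂(G) − Q₂(H)) is bilinear; moreover the infimum is attained. -/
open Matrix QuadraticMap Module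

noncomputable section Stmt7Aux

/-- Pad a 2×2 matrix with zeros to a 3×3 matrix. -/
def padMap : Matrix (Fin 2) (Fin 2) ℝ →ₗ[ℝ] Matrix (Fin 3) (Fin 3) ℝ where
  toFun G := Matrix.of fun i j =>
    if hi : (i : ℕ) < 2 then if hj : (j : ℕ) < 2 then G ⟨i, hi⟩ ⟨j, hj⟩ else 0 else 0
  map_add' x y := by
    ext i j; simp only [Matrix.of_apply, Matrix.add_apply]; split_ifs <;> simp
  map_smul' c x := by
    ext i j; simp only [Matrix.of_apply, Matrix.smul_apply, RingHom.id_apply]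
    split_ifs <;> simp

lemma padMap_apply (G : Matrix (Fin 2) (Fin 2) ℝ) (i j : Fin 2) :
    padMap G i.castSucc j.castSucc = G i j := by
  simp only [padMap, LinearMap.coe_mk, AddHom.coe_mk, Matrix.of_apply]
  have hi : ((i.castSucc : Fin 3) : ℕ) < 2 := i.isLt
  have hj : ((j.castSucc : Fin 3) : ℕ) < 2 := j.isLt
  rw [dif_pos hi, dif_pos hj]
  congr 1 <;> exact Fin.ext rfl

/-- The subspace of 3×3 matrices vanishing on the upper-left 2×2 block. -/
def Wsub : Submodule ℝ (Matrix (Fin 3) (Fin 3) ℝ) where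
  carrier := {F | ∀ i j : Fin 2, F i.castSucc j.castSucc = 0}
  add_mem' := by intro a b ha hb i j; simp [Matrix.add_apply, ha i j, hb i j]
  zero_mem' := by intro i j; simp
  smul_mem' := by intro c a ha i j; simp [Matrix.smul_apply, ha i j]

end Stmt7Aux

section Stmt7Main

variable (Q3 : QuadraticForm ℝ (Matrix (Fin 3) (Fin 3) ℝ))

/-- Cauchy–Schwarz: if `Q3 y = 0` then `polar Q3 x y = 0`. -/
lemma polar_eq_zero_of_psd (hpos : ∀ F, 0 ≤ Q3 F) {x y : Matrix (Fin 3) (Fin 3) ℝ} (hy : Q3 y = 0) :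
    polar Q3 x y = 0 := by
  have key : ∀ t : ℝ, 0 ≤ Q3 y * (t * t) + polar Q3 x y * t + Q3 x := by
    intro t
    have : Q3 (x + t • y) = Q3 x + Q3 (t • y) + polar Q3 x (t • y) := by
      rw [polar]; ring
    have h2 : Q3 (x + t • y) = Q3 y * (t * t) + polar Q3 x y * t + Q3 x := by
      rw [this, QuadraticMap.map_smul, polar_smul_right]
      simp [smul_eq_mul]; ring
    rw [← h2]; exact hpos _
  have hd := discrim_le_zero key
  rw [discrim, hy] at hd
  nlinarith [hd]

end Stmt7Main

/-- The reduced form `Q₂(G) = inf { Q₃(F) : F'' = G }` of a positive semidefinite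
quadratic form `Q₃` is a quadratic form on `2×2` matrices, and the infimum is attained. -/
theorem stmt7 (Q3 : QuadraticForm ℝ (Matrix (Fin 3) (Fin 3) ℝ))
    (hpos : ∀ F, 0 ≤ Q3 F) :
    ∀ Q2 : Matrix (Fin 2) (Fin 2) ℝ → ℝ,
      (Q2 = fun G => sInf {r : ℝ | ∃ F : Matrix (Fin 3) (Fin 3) ℝ,
          (∀ i j : Fin 2, F i.castSucc j.castSucc = G i j) ∧ Q3 F = r}) →
      (∀ G, ∃ F : Matrix (Fin 3) (Fin 3) ℝ,
          (∀ i j : Fin 2, F i.castSucc j.castSucc = G i j) ∧ Q3 F = Q2 G)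
        ∧ ∃ Q : QuadraticForm ℝ (Matrix (Fin 2) (Fin 2) ℝ), ∀ G, Q G = Q2 G := by
  classical
  set V := Matrix (Fin 3) (Fin 3) ℝ
  set B : LinearMap.BilinForm ℝ V := polarBilin Q3 with hB
  -- S : V →ₗ Dual Wsub
  set S : V →ₗ[ℝ] Module.Dual ℝ Wsub := B.compl₂ Wsub.subtype with hS
  set T : Wsub →ₗ[ℝ] Module.Dual ℝ Wsub := S.comp Wsub.subtype with hT
  have hTapp : ∀ (w w' : Wsub), T w w' = polar Q3 (w : V) (w' : V) := fun w w' => rfl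
  have hSapp : ∀ (x : V) (w : Wsub), S x w = polar Q3 x (w : V) := fun x w => rfl
  -- kernel of T consists of w with Q3 w = 0
  have hkerQ : ∀ w ∈ LinearMap.ker T, Q3 (w : V) = 0 := by
    intro w hw
    have : T w w = 0 := by rw [LinearMap.mem_ker.mp hw]; rfl
    rw [hTapp] at this
    have h2 : (0:ℝ) = 2 * Q3 (w : V) := by
      rw [← this, polar_self, two_smul, two_mul]
    linarith [hpos (w : V)]
  -- every S x vanishes on ker T
  have hSann : ∀ x : V, S x ∈ (LinearMap.ker T).dualAnnihilator := by
    intro x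
    rw [Submodule.mem_dualAnnihilator]
    intro w hw
    rw [hSapp]
    exact polar_eq_zero_of_psd Q3 hpos (hkerQ w hw)
  -- range T = dualAnnihilator (ker T)
  have hrange : LinearMap.range T = (LinearMap.ker T).dualAnnihilator := by
    apply Submodule.eq_of_le_of_finrank_eq
    · rintro _ ⟨w, rfl⟩
      rw [Submodule.mem_dualAnnihilator]
      intro k hk
      rw [hTapp, polar_comm, ← hTapp, LinearMap.mem_ker.mp hk]
      rfl
    · have h1 : finrank ℝ (LinearMap.range T) + finrank ℝ (LinearMap.ker T)
          = finrank ℝ Wsub := LinearMap.finrank_range_add_finrank_ker T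
      have h2 : finrank ℝ (LinearMap.ker T)
          + finrank ℝ (LinearMap.ker T).dualAnnihilator = finrank ℝ Wsub := by
        rw [add_comm, ← (Subspace.quotEquivAnnihilator (LinearMap.ker T)).finrank_eq]
        exact Submodule.finrank_quotient_add_finrank _
      omega
  -- right inverse of T onto its range
  haveI : Module.Free ℝ (LinearMap.range T) :=
    Module.Free.of_basis (Basis.ofVectorSpace ℝ (LinearMap.range T))
  haveI : Module.Projective ℝ (LinearMap.range T) := Module.Projective.of_free
  obtain ⟨g, hg⟩ := T.rangeRestrict.exists_rightInverse_of_surjective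
    (LinearMap.range_eq_top.mpr T.surjective_rangeRestrict)
  -- the linear choice of minimizer
  have hSmem : ∀ x : V, -S x ∈ LinearMap.range T := by
    intro x; rw [hrange]; exact neg_mem (hSann x)
  set σ : V →ₗ[ℝ] Wsub :=
    g.comp (LinearMap.codRestrict (LinearMap.range T) (-S) hSmem) with hσ
  have hσprop : ∀ x : V, T (σ x) = -S x := by
    intro x
    have := congrArg (fun f => (f (⟨-S x, hSmem x⟩ : LinearMap.range T) : Module.Dual ℝ Wsub)) hg
    simpa [σ, LinearMap.rangeRestrict, LinearMap.codRestrict] using this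
  -- the minimizing linear map
  set L : Matrix (Fin 2) (Fin 2) ℝ →ₗ[ℝ] V :=
    padMap + Wsub.subtype.comp (σ.comp padMap) with hL
  have hLapp : ∀ G, L G = padMap G + (σ (padMap G) : V) := fun G => rfl
  have hLconstr : ∀ G (i j : Fin 2), L G i.castSucc j.castSucc = G i j := by
    intro G i j
    rw [hLapp]
    have hw := (σ (padMap G)).2 i j
    simp [Matrix.add_apply, padMap_apply, hw]
  -- key minimality
  have hmin : ∀ G (F : V), (∀ i j : Fin 2, F i.castSucc j.castSucc = G i j) →
      Q3 (L G) ≤ Q3 F := by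
    intro G F hF
    have hd : F - L G ∈ Wsub := by
      intro i j
      have hrfl : (F - L G) i.castSucc j.castSucc
          = F i.castSucc j.castSucc - L G i.castSucc j.castSucc := rfl
      rw [hrfl, hF i j, hLconstr G i j, sub_self]
    set d : Wsub := ⟨F - L G, hd⟩ with hdd
    have hFd : F = L G + (d : V) := by simp [hdd]
    have hexp : Q3 F = Q3 (L G) + Q3 (d : V) + polar Q3 (L G) (d : V) := by
      rw [hFd, polar]; ring
    have hpolar : polar Q3 (L G) (d : V) = 0 := by
      have h1 : polar Q3 (L G) (d : V)
          = polar Q3 (padMap G) (d : V) + polar Q3 ((σ (padMap G)) : V) (d : V) := by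
        rw [hLapp]; exact polar_add_left Q3 _ _ _
      have h2 : polar Q3 ((σ (padMap G)) : V) (d : V) = T (σ (padMap G)) d := rfl
      have h3 : polar Q3 (padMap G) (d : V) = S (padMap G) d := rfl
      rw [h1, h2, h3, hσprop]
      simp
    rw [hexp, hpolar]
    have := hpos (d : V)
    linarith
  intro Q2 hQ2
  have hleast : ∀ G, IsLeast {r : ℝ | ∃ F : V,
      (∀ i j : Fin 2, F i.castSucc j.castSucc = G i j) ∧ Q3 F = r} (Q3 (L G)) := by
    intro G
    constructor
    · exact ⟨L G, hLconstr G, rfl⟩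
    · rintro r ⟨F, hF, rfl⟩
      exact hmin G F hF
  have hQ2eq : ∀ G, Q2 G = Q3 (L G) := by
    intro G
    rw [hQ2]
    exact (hleast G).csInf_eq
  constructor
  · intro G
    exact ⟨L G, hLconstr G, (hQ2eq G).symm⟩
  · exact ⟨Q3.comp L, fun G => (hQ2eq G).symm⟩
end

section
/- Let Q₃ : M^{3×3} → ℝ be a quadratic form which is positive definite on symmetric matrices and satisfies Q₃(F) = Q₃(sym F) for all F. Define Q₂ on M^{2×2} by Q₂(G) := min { Q₃(F) : F'' = G }. Then Q₂ is positive definite on symmetric 2×2 matrices: Q₂(G) > 0 whenever G is symmetric and G ≠ 0, and Q₂(G) = Q₂(sym G) for all G. -/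
/-! Because `Q₃` only sees symmetric parts, the values of `Q₃` on matrices with upper-left block
`G` are exactly its values on symmetric matrices with block `sym G`; this gives `Q₂ G = Q₂ (sym G)`.
On the finite-dimensional space of symmetric matrices `Q₃` is positive definite, hence coercive,
`c ‖S‖² ≤ Q₃ S` (minimum over the unit sphere). A symmetric `S` with block `G` has
`‖S‖ ≥ |G i j|`, so for `G ≠ 0` the infimum is at least `c |G i j|² > 0`. -/

open Matrix

attribute [local instance] Matrix.normedAddCommGroup Matrix.normedSpace

namespace QuadraticMap

variable {E : Type*} [NormedAddCommGroup E] [NormedSpace ℝ E] [FiniteDimensional ℝ E]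

theorem continuous_of_finiteDimensional (Q : QuadraticForm ℝ E) : Continuous Q := by
  let L : E →ₗ[ℝ] E →L[ℝ] ℝ :=
    LinearMap.toContinuousLinearMap.toLinearMap ∘ₗ associated (R := ℝ) Q
  have hL : Continuous fun x => L x x :=
    L.continuous_of_finiteDimensional.clm_apply continuous_id
  simpa [L, associated_eq_self_apply] using hL

theorem PosDef.exists_pos_mul_sq_norm_le {Q : QuadraticForm ℝ E} (hQ : Q.PosDef) :
    ∃ c > 0, ∀ x, c * ‖x‖ ^ 2 ≤ Q x := by
  rcases subsingleton_or_nontrivial E with hE | hE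
  · exact ⟨1, one_pos, fun x => by simp [Subsingleton.elim x 0]⟩
  obtain ⟨u, hu, hmin⟩ := (isCompact_sphere (0 : E) 1).exists_isMinOn
    (NormedSpace.sphere_nonempty.2 zero_le_one) (continuous_of_finiteDimensional Q).continuousOn
  have hu0 : u ≠ 0 := ne_zero_of_mem_unit_sphere ⟨u, hu⟩
  refine ⟨Q u, hQ u hu0, fun x => ?_⟩
  rcases eq_or_ne x 0 with rfl | hx
  · simp
  have hnx : 0 < ‖x‖ := norm_pos_iff.2 hx
  have hle : Q u ≤ Q (‖x‖⁻¹ • x) := hmin (by simp [norm_smul, hnx.ne'])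
  rw [QuadraticMap.map_smul, smul_eq_mul] at hle
  calc Q u * ‖x‖ ^ 2 ≤ ‖x‖⁻¹ * ‖x‖⁻¹ * Q x * ‖x‖ ^ 2 := by gcongr
    _ = Q x := by field_simp

end QuadraticMap

namespace Matrix

variable {m n : Type*}

noncomputable def symPart : Matrix n n ℝ →ₗ[ℝ] Matrix n n ℝ :=
  (1 / 2 : ℝ) • (LinearMap.id + (transposeLinearEquiv n n ℝ ℝ).toLinearMap)

theorem symPart_apply (A : Matrix n n ℝ) : symPart A = (1 / 2 : ℝ) • (A + Aᵀ) := rfl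

theorem transpose_symPart (A : Matrix n n ℝ) : (symPart A)ᵀ = symPart A := by
  simp [symPart_apply, add_comm]

theorem symPart_of_transpose_eq {A : Matrix n n ℝ} (hA : Aᵀ = A) : symPart A = A := by
  rw [symPart_apply, hA, ← two_smul ℝ, smul_smul]
  norm_num

theorem symPart_symPart (A : Matrix n n ℝ) : symPart (symPart A) = symPart A :=
  symPart_of_transpose_eq (transpose_symPart A)

theorem symPart_submatrix (A : Matrix n n ℝ) (e : m → n) :
    symPart (A.submatrix e e) = (symPart A).submatrix e e := rfl

noncomputable def symmetricSubmodule (n : Type*) : Submodule ℝ (Matrix n n ℝ) :=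
  LinearMap.range (symPart (n := n))

theorem mem_symmetricSubmodule {S : Matrix n n ℝ} : S ∈ symmetricSubmodule n ↔ Sᵀ = S :=
  ⟨fun ⟨A, hA⟩ => hA ▸ transpose_symPart A, fun h => ⟨S, symPart_of_transpose_eq h⟩⟩

theorem exists_submatrix_eq {R : Type*} [Zero R] {e : m → n} (he : Function.Injective e)
    (G : Matrix m m R) : ∃ F : Matrix n n R, F.submatrix e e = G :=
  ⟨of (Function.extend e (fun i => Function.extend e (G i) 0) 0), by
    ext i j
    simp [he.extend_apply]⟩

theorem image_submatrix_eq_image_symm {e : m → n} (he : Function.Injective e)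
    (Q : Matrix n n ℝ → ℝ) (hQ : ∀ F, Q F = Q (symPart F)) (G : Matrix m m ℝ) :
    Q '' {F | F.submatrix e e = G} = Q '' {S | Sᵀ = S ∧ S.submatrix e e = symPart G} := by
  ext r
  constructor
  · rintro ⟨F, rfl, rfl⟩
    exact ⟨symPart F, ⟨transpose_symPart F, (symPart_submatrix F e).symm⟩, (hQ F).symm⟩
  · rintro ⟨S, ⟨hS, hSG⟩, rfl⟩
    obtain ⟨A, hA⟩ := exists_submatrix_eq he G
    refine ⟨A + (S - symPart A), ?_, ?_⟩
    · change A.submatrix e e + (S.submatrix e e - (symPart A).submatrix e e) = G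
      rw [hSG, ← symPart_submatrix, hA, sub_self, add_zero]
    · rw [hQ, map_add, map_sub, symPart_symPart, symPart_of_transpose_eq hS, add_sub_cancel]

theorem exists_pos_mul_sq_norm_le_of_transpose_eq [Fintype n]
    {Q : QuadraticForm ℝ (Matrix n n ℝ)} (hQ : ∀ S, Sᵀ = S → S ≠ 0 → 0 < Q S) :
    ∃ c > 0, ∀ S : Matrix n n ℝ, Sᵀ = S → c * ‖S‖ ^ 2 ≤ Q S := by
  have hpos : (Q.comp (symmetricSubmodule n).subtype).PosDef := fun S hS =>
    hQ S (mem_symmetricSubmodule.1 S.2) (by simpa using hS)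
  obtain ⟨c, hc, hcS⟩ := hpos.exists_pos_mul_sq_norm_le
  exact ⟨c, hc, fun S hS => hcS ⟨S, mem_symmetricSubmodule.2 hS⟩⟩

theorem sInf_image_symm_submatrix_pos [Fintype n] {Q : QuadraticForm ℝ (Matrix n n ℝ)}
    (hQ : ∀ S, Sᵀ = S → S ≠ 0 → 0 < Q S) {e : m → n} (he : Function.Injective e)
    {G : Matrix m m ℝ} (hG : Gᵀ = G) (hG0 : G ≠ 0) :
    0 < sInf (Q '' {S | Sᵀ = S ∧ S.submatrix e e = G}) := by
  obtain ⟨c, hc, hcoer⟩ := exists_pos_mul_sq_norm_le_of_transpose_eq hQ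
  obtain ⟨i, j, hij⟩ : ∃ i j, G i j ≠ 0 := by
    by_contra! h
    exact hG0 (Matrix.ext h)
  obtain ⟨A, hA⟩ := exists_submatrix_eq he G
  have hne : (Q '' {S | Sᵀ = S ∧ S.submatrix e e = G}).Nonempty :=
    ⟨_, symPart A,
      ⟨transpose_symPart A, by rw [← symPart_submatrix, hA, symPart_of_transpose_eq hG]⟩, rfl⟩
  refine (by positivity : 0 < c * G i j ^ 2).trans_le (le_csInf hne ?_)
  rintro _ ⟨S, ⟨hS, rfl⟩, rfl⟩
  have hentry : |S (e i) (e j)| ≤ ‖S‖ := norm_entry_le_entrywise_sup_norm S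
  calc c * S (e i) (e j) ^ 2 ≤ c * ‖S‖ ^ 2 :=
        mul_le_mul_of_nonneg_left (sq_le_sq' (neg_le_of_abs_le hentry) (le_of_abs_le hentry)) hc.le
    _ ≤ Q S := hcoer S hS

end Matrix

/-- If `Q₃` is positive definite on symmetric matrices and depends only on the
symmetric part, then the reduced form `Q₂` is positive definite on symmetric
`2×2` matrices and depends only on the symmetric part. -/
theorem stmt8 (Q3 : QuadraticForm ℝ (Matrix (Fin 3) (Fin 3) ℝ))
    (hsym : ∀ F : Matrix (Fin 3) (Fin 3) ℝ, Q3 F = Q3 ((1/2 : ℝ) • (F + Fᵀ)))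
    (hpos : ∀ S : Matrix (Fin 3) (Fin 3) ℝ, Sᵀ = S → S ≠ 0 → 0 < Q3 S) :
    ∀ Q2 : Matrix (Fin 2) (Fin 2) ℝ → ℝ,
      (Q2 = fun G => sInf {r : ℝ | ∃ F : Matrix (Fin 3) (Fin 3) ℝ,
          (∀ i j : Fin 2, F i.castSucc j.castSucc = G i j) ∧ Q3 F = r}) →
      (∀ G : Matrix (Fin 2) (Fin 2) ℝ, Gᵀ = G → G ≠ 0 → 0 < Q2 G)
        ∧ ∀ G : Matrix (Fin 2) (Fin 2) ℝ, Q2 G = Q2 ((1/2 : ℝ) • (G + Gᵀ)) := by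
  rintro _ rfl
  have hfiber : ∀ G, {r : ℝ | ∃ F : Matrix (Fin 3) (Fin 3) ℝ,
      (∀ i j : Fin 2, F i.castSucc j.castSucc = G i j) ∧ Q3 F = r} =
      Q3 '' {S | Sᵀ = S ∧ S.submatrix Fin.castSucc Fin.castSucc = symPart G} := fun G => by
    rw [← image_submatrix_eq_image_symm (Fin.castSucc_injective 2) Q3 hsym G]
    exact Set.ext fun r => exists_congr fun F => and_congr_left' Matrix.ext_iff
  refine ⟨fun G hG hG0 => ?_, fun G => ?_⟩
  · simp only [hfiber, symPart_of_transpose_eq hG]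
    exact sInf_image_symm_submatrix_pos hpos (Fin.castSucc_injective 2) hG hG0
  · simp only [hfiber, ← symPart_apply, symPart_symPart]
end
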